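/- arXiv:1303.7286 — 8 statements merged into one kernel-verified Lean document; each statement's English description precedes it below -/
import Mathlib

section
/- Let h_1, …, h_n be positive histograms with d bins and π_1, …, π_n > 0 weights with Σ_j π_j = 1. Let a^i = Σ_{j=1}^n π_j h_j^i be the weighted arithmetic means and g^i = Π_{j=1}^n (h_j^i)^{π_j} the weighted geometric means. Then for every x ∈ (0,∞)^d, Σ_{j=1}^n π_j J(h_j, x) = Σ_{i=1}^d ( x^i·log(x^i/g^i) − a^i·log x^i ) + Σ_{i=1}^d Σ_{j=1}^n π_j h_j^i·log h_j^i; in particular the weighted Jeffreys objective differs from Σ_{i=1}^d ( x^i·log(x^i/g^i) − a^i·log x^i ) by a constant independent of x. -/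
open scoped BigOperators

/-- Jeffreys divergence between positive histograms with `d` bins. -/
noncomputable def Jeffreys {d : ℕ} (p q : Fin d → ℝ) : ℝ :=
  ∑ i, (p i - q i) * Real.log (p i / q i)

/-!
Bin by bin, `(hⱼ - x) log(hⱼ / x) = hⱼ log hⱼ - hⱼ log x - x log hⱼ + x log x`. Averaging with the
weights `πⱼ` (which sum to one) turns the four terms into `∑ πⱼ hⱼ log hⱼ`, `-a log x`,
`-x log g` and `x log x`, and the middle two of these recombine to `x log (x / g) - a log x`.
-/

namespace Real

variable {ι : Type*} {s : Finset ι}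

theorem log_prod_rpow {z w : ι → ℝ} (hz : ∀ j ∈ s, 0 < z j) :
    log (∏ j ∈ s, z j ^ w j) = ∑ j ∈ s, w j * log (z j) := by
  rw [log_prod fun j hj => (rpow_pos_of_pos (hz j hj) _).ne']
  exact Finset.sum_congr rfl fun j hj => log_rpow (hz j hj) _

theorem weighted_sum_mul_log_div {z w : ι → ℝ} {y : ℝ} (hz : ∀ j ∈ s, 0 < z j) (hy : y ≠ 0)
    (hw : ∑ j ∈ s, w j = 1) :
    ∑ j ∈ s, w j * ((z j - y) * log (z j / y)) =
      y * log (y / ∏ j ∈ s, z j ^ w j) - (∑ j ∈ s, w j * z j) * log y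
        + ∑ j ∈ s, w j * (z j * log (z j)) := by
  have hgeom : 0 < ∏ j ∈ s, z j ^ w j :=
    Finset.prod_pos fun j hj => rpow_pos_of_pos (hz j hj) _
  have hexpand : ∀ j ∈ s, w j * ((z j - y) * log (z j / y)) =
      w j * (z j * log (z j)) - w j * z j * log y - y * (w j * log (z j)) + y * log y * w j := by
    intro j hj
    rw [log_div (hz j hj).ne' hy]
    ring
  rw [Finset.sum_congr rfl hexpand, log_div hy hgeom.ne', log_prod_rpow hz]
  simp only [Finset.sum_add_distrib, Finset.sum_sub_distrib, ← Finset.sum_mul, ← Finset.mul_sum,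
    hw]
  ring

end Real

theorem jeffreys_objective_decomposition_general
    (d n : ℕ) (h : Fin n → Fin d → ℝ) (π : Fin n → ℝ)
    (hpos : ∀ j i, 0 < h j i) (hπ1 : ∑ j, π j = 1)
    (x : Fin d → ℝ) (hx : ∀ i, 0 < x i) :
    ∑ j, π j * Jeffreys (h j) x =
      (∑ i, (x i * Real.log (x i / ∏ j, h j i ^ π j)
              - (∑ j, π j * h j i) * Real.log (x i)))
        + ∑ i, ∑ j, π j * (h j i * Real.log (h j i)) := by
  simp only [Jeffreys, Finset.mul_sum]
  rw [Finset.sum_comm, ← Finset.sum_add_distrib]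
  exact Finset.sum_congr rfl fun i _ =>
    Real.weighted_sum_mul_log_div (fun j _ => hpos j i) (hx i).ne' hπ1

/-- the weighted Jeffreys objective equals
`∑ i (xⁱ log(xⁱ/gⁱ) − aⁱ log xⁱ)` plus a constant independent of `x`. -/
theorem jeffreys_objective_decomposition
    (d n : ℕ) (h : Fin n → Fin d → ℝ) (π : Fin n → ℝ)
    (hpos : ∀ j i, 0 < h j i) (hπ : ∀ j, 0 < π j) (hπ1 : ∑ j, π j = 1)
    (x : Fin d → ℝ) (hx : ∀ i, 0 < x i) :
    ∑ j, π j * Jeffreys (h j) x =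
      (∑ i, (x i * Real.log (x i / ∏ j, h j i ^ π j)
              - (∑ j, π j * h j i) * Real.log (x i)))
        + ∑ i, ∑ j, π j * (h j i * Real.log (h j i)) :=
  jeffreys_objective_decomposition_general d n h π hpos hπ1 x hx
end

section
/- Let h̃_1, …, h̃_n be frequency histograms with d bins (each h̃_j^i > 0 and Σ_{i=1}^d h̃_j^i = 1) and π_1, …, π_n > 0 weights with Σ_j π_j = 1. Let a^i = Σ_{j=1}^n π_j h̃_j^i and g^i = Π_{j=1}^n (h̃_j^i)^{π_j}, and let c ∈ (0,∞)^d be defined coordinate-wise as the unique positive solution of log(c^i/g^i) + 1 = a^i/c^i (the Jeffreys positive centroid). Then the cumulative sum w_c = Σ_{i=1}^d c^i satisfies 0 < w_c ≤ 1. -/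
/-!
By weighted AM–GM, `gⁱ ≤ aⁱ`. If `cⁱ > aⁱ`, the centroid equation gives `log (cⁱ/gⁱ) = aⁱ/cⁱ - 1 < 0`,
so `cⁱ < gⁱ ≤ aⁱ`, a contradiction. Hence `cⁱ ≤ aⁱ` in every bin, and the arithmetic mean of
frequency histograms is again one, so `∑ cⁱ ≤ ∑ aⁱ = 1`.
-/

open scoped BigOperators

theorem le_of_log_div_add_one_eq_div {a c g : ℝ} (hc : 0 < c) (hg : 0 < g) (hga : g ≤ a)
    (h : Real.log (c / g) + 1 = a / c) : c ≤ a := by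
  by_contra! hac
  have hlog : Real.log (c / g) < 0 := by linarith [(div_lt_one hc).mpr hac]
  have hcg : c < g := (div_lt_one hg).mp ((Real.log_neg_iff (div_pos hc hg)).mp hlog)
  linarith

theorem sum_weighted_mean_eq_one {ι κ : Type*} [Fintype ι] [Fintype κ] (h : κ → ι → ℝ)
    (π : κ → ℝ) (hfreq : ∀ j, ∑ i, h j i = 1) (hπ1 : ∑ j, π j = 1) :
    ∑ i, ∑ j, π j * h j i = 1 := by
  rw [Finset.sum_comm]
  simp only [← Finset.mul_sum, hfreq, mul_one, hπ1]

/-- for frequency histograms, the cumulative sum `w_c` of the Jeffreys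
positive centroid (characterized coordinate-wise by `log(cⁱ/gⁱ) + 1 = aⁱ/cⁱ`)
satisfies `0 < w_c ≤ 1`. -/
theorem jeffreys_positive_centroid_mass_le_one
    (d n : ℕ) (h : Fin n → Fin d → ℝ) (π : Fin n → ℝ)
    (hpos : ∀ j i, 0 < h j i) (hfreq : ∀ j, ∑ i, h j i = 1)
    (hπ : ∀ j, 0 < π j) (hπ1 : ∑ j, π j = 1)
    (c : Fin d → ℝ) (hc : ∀ i, 0 < c i)
    (hcent : ∀ i, Real.log (c i / ∏ j, h j i ^ π j) + 1 = (∑ j, π j * h j i) / c i) :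
    0 < ∑ i, c i ∧ ∑ i, c i ≤ 1 := by
  have hg : ∀ i, 0 < ∏ j, h j i ^ π j := fun i =>
    Finset.prod_pos fun j _ => Real.rpow_pos_of_pos (hpos j i) _
  have hga : ∀ i, ∏ j, h j i ^ π j ≤ ∑ j, π j * h j i := fun i =>
    Real.geom_mean_le_arith_mean_weighted _ _ _ (fun j _ => (hπ j).le) hπ1
      (fun j _ => (hpos j i).le)
  obtain ⟨j, -⟩ := Finset.nonempty_of_sum_ne_zero (hπ1 ▸ one_ne_zero)
  have hbins : (Finset.univ : Finset (Fin d)).Nonempty :=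
    Finset.nonempty_of_sum_ne_zero ((hfreq j).symm ▸ one_ne_zero)
  refine ⟨Finset.sum_pos (fun i _ => hc i) hbins, ?_⟩
  calc ∑ i, c i ≤ ∑ i, ∑ j, π j * h j i := Finset.sum_le_sum fun i _ =>
        le_of_log_div_add_one_eq_div (hc i) (hg i) (hga i) (hcent i)
    _ = 1 := sum_weighted_mean_eq_one h π hfreq hπ1
end

section
/- Let x ∈ (0,∞)^d be a positive histogram with cumulative sum w_x = Σ_{i=1}^d x^i, let x̃ = x/w_x be its normalization, and let h̃ be a frequency histogram with d bins. Then J(x, h̃) = J(x̃, h̃) + (w_x − 1)·( KL(x̃ : h̃) + log w_x ), where J(p,q) = Σ_{i=1}^d (p^i − q^i)·log(p^i/q^i) and KL(p̃ : q̃) = Σ_{i=1}^d p̃^i·log(p̃^i/q̃^i). -/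
open scoped BigOperators

/-- Kullback-Leibler term between positive histograms with `d` bins. -/
noncomputable def KL {d : ℕ} (p q : Fin d → ℝ) : ℝ :=
  ∑ i, p i * Real.log (p i / q i)

/-! Writing `x = w • x̃`, every logarithm `log (x i / h i)` splits as `log (x̃ i / h i) + log w`.
Expanding `(x i - h i) = (x̃ i - h i) + (w - 1) x̃ i` then gives `J(x̃, h) + (w - 1) KL(x̃ : h)`
plus `(∑ x - ∑ h) log w = (w - 1) log w`, since `h` is a frequency histogram. -/

lemma Real.log_mul_div {c a b : ℝ} (hc : c ≠ 0) (ha : a ≠ 0) (hb : b ≠ 0) :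
    Real.log (c * a / b) = Real.log (a / b) + Real.log c := by
  rw [mul_div_assoc, Real.log_mul hc (div_ne_zero ha hb), add_comm]

theorem jeffreys_const_mul {d : ℕ} {p q : Fin d → ℝ} {c : ℝ} (hc : c ≠ 0)
    (hp : ∀ i, p i ≠ 0) (hq : ∀ i, q i ≠ 0) :
    Jeffreys (fun i => c * p i) q =
      Jeffreys p q + (c - 1) * KL p q + (c * ∑ i, p i - ∑ i, q i) * Real.log c := by
  have termwise : ∀ i, (c * p i - q i) * Real.log (c * p i / q i) =
      (p i - q i) * Real.log (p i / q i) + (c - 1) * (p i * Real.log (p i / q i))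
        + (c * p i - q i) * Real.log c := fun i => by
    rw [Real.log_mul_div hc (hp i) (hq i)]
    ring
  simp only [Jeffreys, KL, termwise, Finset.sum_add_distrib, ← Finset.mul_sum, ← Finset.sum_mul,
    Finset.sum_sub_distrib]

lemma Finset.sum_div_sum_self {ι : Type*} (s : Finset ι) (f : ι → ℝ) (hf : ∑ i ∈ s, f i ≠ 0) :
    ∑ i ∈ s, f i / ∑ k ∈ s, f k = 1 := by
  rw [← Finset.sum_div, div_self hf]

/-- `J(x, h̃) = J(x̃, h̃) + (w_x − 1)·(KL(x̃ : h̃) + log w_x)` where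
`x̃ = x / w_x` is the normalization of the positive histogram `x`. -/
theorem jeffreys_normalization_identity
    (d : ℕ) (x h : Fin d → ℝ) (hx : ∀ i, 0 < x i)
    (hh : ∀ i, 0 < h i) (hh1 : ∑ i, h i = 1) :
    Jeffreys x h =
      Jeffreys (fun i => x i / ∑ k, x k) h +
        ((∑ i, x i) - 1) * (KL (fun i => x i / ∑ k, x k) h + Real.log (∑ i, x i)) := by
  have hbins : (Finset.univ : Finset (Fin d)).Nonempty :=
    Finset.nonempty_of_sum_ne_zero (hh1 ▸ one_ne_zero)
  have hw : ∑ k, x k ≠ 0 := (Finset.sum_pos (fun i _ => hx i) hbins).ne'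
  have key := jeffreys_const_mul (c := ∑ k, x k) hw (fun i => div_ne_zero (hx i).ne' hw)
    (fun i => (hh i).ne')
  simp only [mul_div_cancel₀ _ hw, Finset.sum_div_sum_self _ _ hw, hh1] at key
  rw [key]
  ring
end

section
/- Let x ∈ (0,∞)^d be a positive histogram with cumulative sum w_x = Σ_{i=1}^d x^i and normalization x̃ = x/w_x, and let h̃_1, …, h̃_n be frequency histograms with weights π_j > 0 summing to 1. Then Σ_{j=1}^n π_j J(x̃, h̃_j) = Σ_{j=1}^n π_j J(x, h̃_j) + ((1 − w_x)/w_x)·Σ_{j=1}^n π_j KL(x : h̃_j), where J(p,q) = Σ_{i=1}^d (p^i − q^i)·log(p^i/q^i) and KL(p:q) = Σ_{i=1}^d p^i·log(p^i/q^i). -/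
open scoped BigOperators

/-!
Dividing `x` by `w` shifts every log-ratio `log (xᵢ / qᵢ)` by `-log w`. Since
`(xᵢ / w - qᵢ) = (xᵢ - qᵢ) + (1/w - 1) xᵢ`, the Jeffreys divergence picks up `(1/w - 1) KL(x : q)`
plus `-log w · (Σ xᵢ / w - Σ qᵢ)`, and the last term vanishes when `w = Σ xᵢ` and `Σ qᵢ = 1`.
Averaging over the `h̃ⱼ` is linear.
-/

theorem Jeffreys_div_const {d : ℕ} (x q : Fin d → ℝ) (w : ℝ) (hx : ∀ i, x i ≠ 0)
    (hq : ∀ i, q i ≠ 0) (hw : w ≠ 0) :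
    Jeffreys (fun i => x i / w) q =
      Jeffreys x q + (1 / w - 1) * KL x q - Real.log w * (∑ i, x i / w - ∑ i, q i) := by
  simp only [Jeffreys, KL, ← Finset.sum_sub_distrib, Finset.mul_sum, ← Finset.sum_add_distrib]
  refine Finset.sum_congr rfl fun i _ => ?_
  rw [div_right_comm, Real.log_div (div_ne_zero (hx i) (hq i)) hw]
  ring

theorem Jeffreys_normalize {d : ℕ} (x q : Fin d → ℝ) (hx : ∀ i, x i ≠ 0)
    (hq : ∀ i, q i ≠ 0) (hq1 : ∑ i, q i = 1) (hw : ∑ i, x i ≠ 0) :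
    Jeffreys (fun i => x i / ∑ k, x k) q =
      Jeffreys x q + ((1 - ∑ i, x i) / ∑ i, x i) * KL x q := by
  rw [Jeffreys_div_const x q _ hx hq hw, ← Finset.sum_div, hq1, div_self hw, sub_self, mul_zero,
    sub_zero, sub_div, div_self hw]

theorem jeffreys_normalized_vs_positive_general
    (d n : ℕ) (x : Fin d → ℝ) (hx : ∀ i, 0 < x i)
    (h : Fin n → Fin d → ℝ) (hpos : ∀ j i, 0 < h j i) (hfreq : ∀ j, ∑ i, h j i = 1)
    (π : Fin n → ℝ) :
    ∑ j, π j * Jeffreys (fun i => x i / ∑ k, x k) (h j) =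
      (∑ j, π j * Jeffreys x (h j)) +
        ((1 - ∑ i, x i) / ∑ i, x i) * ∑ j, π j * KL x (h j) := by
  rcases isEmpty_or_nonempty (Fin d) with _ | _
  · simp [Jeffreys, KL]
  have hw : ∑ i, x i ≠ 0 := (Finset.sum_pos (fun i _ => hx i) Finset.univ_nonempty).ne'
  rw [Finset.mul_sum, ← Finset.sum_add_distrib]
  refine Finset.sum_congr rfl fun j _ => ?_
  rw [Jeffreys_normalize x (h j) (fun i => (hx i).ne') (fun i => (hpos j i).ne') (hfreq j) hw]
  ring

/-- `J(x̃, H̃) = J(x, H̃) + ((1 − w_x)/w_x)·KL(x : H̃)` where `x̃ = x / w_x`. -/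
theorem jeffreys_normalized_vs_positive
    (d n : ℕ) (x : Fin d → ℝ) (hx : ∀ i, 0 < x i)
    (h : Fin n → Fin d → ℝ) (hpos : ∀ j i, 0 < h j i) (hfreq : ∀ j, ∑ i, h j i = 1)
    (π : Fin n → ℝ) (hπ : ∀ j, 0 < π j) (hπ1 : ∑ j, π j = 1) :
    ∑ j, π j * Jeffreys (fun i => x i / ∑ k, x k) (h j) =
      (∑ j, π j * Jeffreys x (h j)) +
        ((1 - ∑ i, x i) / ∑ i, x i) * ∑ j, π j * KL x (h j) :=
  jeffreys_normalized_vs_positive_general d n x hx h hpos hfreq π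
end

section
/- Let h̃_1, …, h̃_n be frequency histograms with d bins and weights π_j > 0 summing to 1. Let c be the Jeffreys positive centroid (the unique minimizer of x ↦ Σ_j π_j J(h̃_j, x) over (0,∞)^d), w_c = Σ_{i=1}^d c^i its cumulative sum, c̃' = c/w_c its normalization, and let c̃ be a minimizer of the same objective over the frequency histograms (the probability simplex with all positive coordinates). If J(c̃, H̃) := Σ_j π_j J(h̃_j, c̃) > 0 and J(c, H̃) := Σ_j π_j J(h̃_j, c) > 0, then the approximation factor α = J(c̃', H̃)/J(c̃, H̃) satisfies 1 ≤ α ≤ 1 + (1/w_c − 1)·KL(c : H̃)/J(c, H̃) ≤ 1/w_c, where KL(c : H̃) = Σ_j π_j Σ_{i=1}^d c^i·log(c^i/h̃_j^i) and J(c̃', H̃) = Σ_j π_j J(h̃_j, c̃'). -/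
open scoped BigOperators

/-- Gibbs inequality for positive vectors. -/
lemma gibbs_aux {d : ℕ} (p q : Fin d → ℝ) (hp : ∀ i, 0 < p i) (hq : ∀ i, 0 < q i) :
    (∑ i, p i) - (∑ i, q i) ≤ KL p q := by
  rw [← Finset.sum_sub_distrib]
  apply Finset.sum_le_sum
  intro i _
  have hpi := hp i; have hqi := hq i
  have h1 : Real.log (q i / p i) ≤ q i / p i - 1 :=
    Real.log_le_sub_one_of_pos (by positivity)
  have h2 : Real.log (p i / q i) = - Real.log (q i / p i) := by
    rw [← Real.log_inv, inv_div]
  have h3 : p i * Real.log (q i / p i) ≤ q i - p i := by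
    have := mul_le_mul_of_nonneg_left h1 hpi.le
    have hd : p i * (q i / p i - 1) = q i - p i := by field_simp
    linarith
  rw [h2]; linarith

lemma jeffreys_eq_KL_add_KL {d : ℕ} (p q : Fin d → ℝ)
    (hp : ∀ i, 0 < p i) (hq : ∀ i, 0 < q i) :
    Jeffreys p q = KL p q + KL q p := by
  simp only [Jeffreys, KL, ← Finset.sum_add_distrib]
  apply Finset.sum_congr rfl
  intro i _
  have h2 : Real.log (q i / p i) = - Real.log (p i / q i) := by
    rw [← Real.log_inv, inv_div]
  rw [h2]; ring

lemma jeffreys_scale {d : ℕ} (hh c : Fin d → ℝ) (hhpos : ∀ i, 0 < hh i)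
    (hh1 : ∑ i, hh i = 1) (hc : ∀ i, 0 < c i) (w : ℝ) (hw : w = ∑ i, c i)
    (hwpos : 0 < w) :
    Jeffreys hh (fun i => c i / w) = Jeffreys hh c + (1 / w - 1) * KL c hh := by
  simp only [Jeffreys, KL]
  have step : ∀ i ∈ Finset.univ, (hh i - c i / w) * Real.log (hh i / (c i / w)) =
      (hh i - c i) * Real.log (hh i / c i)
        + (1 / w - 1) * (c i * Real.log (c i / hh i))
        + Real.log w * (hh i - c i / w) := by
    intro i _
    have hci := hc i; have hhi := hhpos i
    have e1 : Real.log (hh i / (c i / w)) = Real.log (hh i / c i) + Real.log w := by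
      rw [div_div_eq_mul_div, Real.log_div (by positivity) hci.ne',
        Real.log_mul hhi.ne' hwpos.ne', Real.log_div hhi.ne' hci.ne']
      ring
    have e2 : Real.log (c i / hh i) = - Real.log (hh i / c i) := by
      rw [← Real.log_inv, inv_div]
    rw [e1, e2]; ring
  rw [Finset.sum_congr rfl step]
  rw [Finset.sum_add_distrib, Finset.sum_add_distrib, ← Finset.mul_sum, ← Finset.mul_sum]
  have hz : ∑ i, (hh i - c i / w) = 0 := by
    rw [Finset.sum_sub_distrib, hh1, ← Finset.sum_div, ← hw, div_self hwpos.ne']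
    ring
  rw [hz, mul_zero, add_zero]

/-- the normalized Jeffreys positive centroid `c̃' = c / w_c` approximates
the Jeffreys frequency centroid `c̃` with factor
`1 ≤ α ≤ 1 + (1/w_c − 1)·KL(c : H̃)/J(c, H̃) ≤ 1/w_c`. -/
theorem jeffreys_frequency_centroid_approximation
    (d n : ℕ) (h : Fin n → Fin d → ℝ) (π : Fin n → ℝ)
    (hpos : ∀ j i, 0 < h j i) (hfreq : ∀ j, ∑ i, h j i = 1)
    (hπ : ∀ j, 0 < π j) (hπ1 : ∑ j, π j = 1)
    -- the Jeffreys positive centroid `c`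
    (c : Fin d → ℝ) (hc : ∀ i, 0 < c i)
    (hcmin : ∀ x : Fin d → ℝ, (∀ i, 0 < x i) →
      ∑ j, π j * Jeffreys (h j) c ≤ ∑ j, π j * Jeffreys (h j) x)
    -- a Jeffreys frequency centroid `c̃`
    (ct : Fin d → ℝ) (hct : ∀ i, 0 < ct i) (hct1 : ∑ i, ct i = 1)
    (hctmin : ∀ x : Fin d → ℝ, (∀ i, 0 < x i) → (∑ i, x i = 1) →
      ∑ j, π j * Jeffreys (h j) ct ≤ ∑ j, π j * Jeffreys (h j) x)
    (hJct : 0 < ∑ j, π j * Jeffreys (h j) ct)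
    (hJc : 0 < ∑ j, π j * Jeffreys (h j) c) :
    1 ≤ (∑ j, π j * Jeffreys (h j) (fun i => c i / ∑ k, c k)) /
          (∑ j, π j * Jeffreys (h j) ct) ∧
    (∑ j, π j * Jeffreys (h j) (fun i => c i / ∑ k, c k)) /
          (∑ j, π j * Jeffreys (h j) ct) ≤
      1 + (1 / (∑ i, c i) - 1) *
            (∑ j, π j * KL c (h j)) / (∑ j, π j * Jeffreys (h j) c) ∧
    1 + (1 / (∑ i, c i) - 1) *
          (∑ j, π j * KL c (h j)) / (∑ j, π j * Jeffreys (h j) c) ≤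
      1 / (∑ i, c i) := by
  have hd : 0 < d := by
    by_contra hd0
    push_neg at hd0
    interval_cases d
    have := hct1
    simp at this
  haveI : Nonempty (Fin d) := ⟨⟨0, hd⟩⟩
  set w : ℝ := ∑ i, c i with hw
  have hwpos : 0 < w := Finset.sum_pos (fun i _ => hc i) Finset.univ_nonempty
  set J : ℝ := ∑ j, π j * Jeffreys (h j) c with hJ
  set K : ℝ := ∑ j, π j * KL c (h j) with hK
  set A : ℝ := ∑ j, π j * KL (h j) c with hA
  set Jct : ℝ := ∑ j, π j * Jeffreys (h j) ct with hJct'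
  -- the scaled centroid
  have hcw_pos : ∀ i, 0 < c i / w := fun i => div_pos (hc i) hwpos
  have hcw_sum : ∑ i, c i / w = 1 := by
    rw [← Finset.sum_div, ← hw, div_self hwpos.ne']
  -- key identity
  have hJc' : (∑ j, π j * Jeffreys (h j) (fun i => c i / ∑ k, c k)) =
      J + (1 / w - 1) * K := by
    have : ∀ j ∈ Finset.univ, π j * Jeffreys (h j) (fun i => c i / ∑ k, c k) =
        π j * Jeffreys (h j) c + (1 / w - 1) * (π j * KL c (h j)) := by
      intro j _
      rw [jeffreys_scale (h j) c (hpos j) (hfreq j) hc w hw hwpos]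
      ring
    rw [Finset.sum_congr rfl this, Finset.sum_add_distrib, ← Finset.mul_sum]
  set Jc' : ℝ := ∑ j, π j * Jeffreys (h j) (fun i => c i / ∑ k, c k) with hJc'def
  -- Gibbs bounds
  have hKlb : w - 1 ≤ K := by
    have : ∀ j ∈ Finset.univ, π j * (w - 1) ≤ π j * KL c (h j) := by
      intro j _
      apply mul_le_mul_of_nonneg_left _ (hπ j).le
      have := gibbs_aux c (h j) hc (hpos j)
      rw [hfreq j] at this
      linarith
    have hsum := Finset.sum_le_sum this
    rw [← Finset.sum_mul, hπ1, one_mul] at hsum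
    exact hsum
  have hAlb : 1 - w ≤ A := by
    have : ∀ j ∈ Finset.univ, π j * (1 - w) ≤ π j * KL (h j) c := by
      intro j _
      apply mul_le_mul_of_nonneg_left _ (hπ j).le
      have := gibbs_aux (h j) c (hpos j) hc
      rw [hfreq j] at this
      linarith
    have hsum := Finset.sum_le_sum this
    rw [← Finset.sum_mul, hπ1, one_mul] at hsum
    exact hsum
  -- J = A + K
  have hJAK : J = A + K := by
    rw [hJ, hA, hK, ← Finset.sum_add_distrib]
    apply Finset.sum_congr rfl
    intro j _
    rw [jeffreys_eq_KL_add_KL (h j) c (hpos j) hc]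
    ring
  -- minimality at c/w gives (1/w - 1) * K ≥ 0
  have hmin1 : J ≤ Jc' := hcmin (fun i => c i / ∑ k, c k) hcw_pos
  have htK : 0 ≤ (1 / w - 1) * K := by rw [hJc'] at hmin1; linarith
  -- w ≤ 1
  have hwle1 : w ≤ 1 := by
    by_contra hw1
    push_neg at hw1
    have h1 : 1 / w - 1 < 0 := by
      rw [sub_neg, div_lt_one hwpos]; exact hw1
    have h2 : 0 < K := by linarith
    nlinarith
  have ht0 : 0 ≤ 1 / w - 1 := by
    rw [sub_nonneg, le_div_iff₀ hwpos, one_mul]; exact hwle1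
  have hKJ : K ≤ J := by
    have : 0 ≤ A := by linarith
    linarith [hJAK]
  have hJc'pos : 0 < Jc' := by rw [hJc']; nlinarith
  have hmin2 : Jct ≤ Jc' := hctmin (fun i => c i / ∑ k, c k) hcw_pos hcw_sum
  refine ⟨?_, ?_, ?_⟩
  · rw [le_div_iff₀ hJct, one_mul]; exact hmin2
  · have hstep : Jc' / Jct ≤ Jc' / J :=
      div_le_div_of_nonneg_left hJc'pos.le hJc (hcmin ct hct)
    have heq : Jc' / J = 1 + (1 / w - 1) * K / J := by
      rw [hJc', add_div, div_self hJc.ne']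
    calc Jc' / Jct ≤ Jc' / J := hstep
      _ = 1 + (1 / w - 1) * K / J := heq
  · have : (1 / w - 1) * K / J ≤ 1 / w - 1 := by
      rw [div_le_iff₀ hJc]
      nlinarith
    linarith
end

section
/- Let h̃_1, …, h̃_n be frequency histograms with d bins and weights π_j > 0 summing to 1. Let ã^i = Σ_j π_j h̃_j^i be the normalized arithmetic mean and g̃^i = Π_j (h̃_j^i)^{π_j} / Σ_{k=1}^d Π_j (h̃_j^k)^{π_j} the normalized geometric mean. Then for any two frequency histograms x and y with d bins, Σ_j π_j J(h̃_j, x) − Σ_j π_j J(h̃_j, y) = ( KL(ã : x) + KL(x : g̃) ) − ( KL(ã : y) + KL(y : g̃) ); in particular, minimizing Σ_j π_j J(h̃_j, ·) over the frequency histograms is equivalent to minimizing KL(ã : ·) + KL(· : g̃). -/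
open scoped BigOperators

/-!
Jeffreys divergence is the symmetrised Kullback–Leibler divergence, `J(p, q) = KL(p : q) + KL(q : p)`.
Averaging the first half over the `h̃_j` gives `KL(ã : z)` up to a term independent of `z`, since
`KL(p : z)` is affine in `p`. Averaging the second half gives `KL(z : G)` with `G` the unnormalised
geometric mean, since `KL(z : q)` is affine in `log q`; and for a frequency histogram `z`,
normalising `G` to `g̃` shifts `KL(z : ·)` by the constant `log Σ_k G^k`.
-/

open Finset
-- Not `open Real`: its notation `π` would capture the weights `π`.
open Real (log log_div log_prod log_rpow log_inv rpow_pos_of_pos)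

theorem mul_log_div_of_ne_zero (x : ℝ) {y : ℝ} (hy : y ≠ 0) :
    x * log (x / y) = x * log x - x * log y := by
  rcases eq_or_ne x 0 with rfl | hx
  · simp
  · rw [log_div hx hy, mul_sub]

theorem KL_eq_sub_of_ne_zero {d : ℕ} (p : Fin d → ℝ) {q : Fin d → ℝ} (hq : ∀ i, q i ≠ 0) :
    KL p q = ∑ i, p i * log (p i) - ∑ i, p i * log (q i) := by
  rw [KL, ← sum_sub_distrib]
  exact sum_congr rfl fun i _ => mul_log_div_of_ne_zero _ (hq i)

theorem Jeffreys_eq_KL_add_KL {d : ℕ} (p q : Fin d → ℝ) : Jeffreys p q = KL p q + KL q p := by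
  rw [Jeffreys, KL, KL, ← sum_add_distrib]
  refine sum_congr rfl fun i _ => ?_
  rw [← inv_div (p i), log_inv]
  ring

namespace Histogram

variable {d n : ℕ}

noncomputable def arithMean (π : Fin n → ℝ) (h : Fin n → Fin d → ℝ) : Fin d → ℝ :=
  fun i => ∑ j, π j * h j i

noncomputable def geomMean (π : Fin n → ℝ) (h : Fin n → Fin d → ℝ) : Fin d → ℝ :=
  fun i => ∏ j, h j i ^ π j

noncomputable def normalize (p : Fin d → ℝ) : Fin d → ℝ :=
  fun i => p i / ∑ k, p k

theorem geomMean_pos {π : Fin n → ℝ} {h : Fin n → Fin d → ℝ} (hpos : ∀ j i, 0 < h j i)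
    (i : Fin d) : 0 < geomMean π h i :=
  prod_pos fun j _ => rpow_pos_of_pos (hpos j i) _

theorem log_geomMean {π : Fin n → ℝ} {h : Fin n → Fin d → ℝ} (hpos : ∀ j i, 0 < h j i)
    (i : Fin d) : log (geomMean π h i) = ∑ j, π j * log (h j i) := by
  rw [geomMean, log_prod fun j _ => (rpow_pos_of_pos (hpos j i) _).ne']
  exact sum_congr rfl fun j _ => log_rpow (hpos j i) _

theorem sum_mul_KL_left (π : Fin n → ℝ) (h : Fin n → Fin d → ℝ) {z : Fin d → ℝ}
    (hz : ∀ i, z i ≠ 0) :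
    ∑ j, π j * KL (h j) z = KL (arithMean π h) z +
      ((∑ j, π j * ∑ i, h j i * log (h j i)) -
        ∑ i, arithMean π h i * log (arithMean π h i)) := by
  have cross : ∑ j, π j * ∑ i, h j i * log (z i) = ∑ i, arithMean π h i * log (z i) := by
    simp only [arithMean, mul_sum, sum_mul, mul_assoc]
    exact sum_comm
  simp only [KL_eq_sub_of_ne_zero _ hz, mul_sub, sum_sub_distrib, cross]
  ring

theorem sum_mul_KL_right {π : Fin n → ℝ} (hπ1 : ∑ j, π j = 1) {h : Fin n → Fin d → ℝ}
    (hpos : ∀ j i, 0 < h j i) (z : Fin d → ℝ) :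
    ∑ j, π j * KL z (h j) = KL z (geomMean π h) := by
  have cross : ∑ j, π j * ∑ i, z i * log (h j i) = ∑ i, z i * log (geomMean π h i) := by
    simp only [log_geomMean hpos, mul_sum, mul_left_comm (π _)]
    exact sum_comm
  have hweights (c : ℝ) : ∑ j, π j * c = c := by rw [← sum_mul, hπ1, one_mul]
  rw [KL_eq_sub_of_ne_zero z fun i => (geomMean_pos hpos i).ne']
  simp only [KL_eq_sub_of_ne_zero z fun i => (hpos _ i).ne', mul_sub, sum_sub_distrib, cross,
    hweights]

theorem KL_normalize {z q : Fin d → ℝ} (hz1 : ∑ i, z i = 1) (hq : ∀ i, 0 < q i) :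
    KL z (normalize q) = KL z q + log (∑ k, q k) := by
  have hne : Nonempty (Fin d) := by
    by_contra! h0
    simp at hz1
  have hsum : 0 < ∑ k, q k := sum_pos (fun k _ => hq k) univ_nonempty
  rw [KL_eq_sub_of_ne_zero z (q := normalize q) fun i => (div_pos (hq i) hsum).ne',
    KL_eq_sub_of_ne_zero z fun i => (hq i).ne']
  simp only [normalize, log_div (hq _).ne' hsum.ne', mul_sub, sum_sub_distrib, ← sum_mul, hz1]
  ring

theorem sum_mul_Jeffreys_eq {π : Fin n → ℝ} (hπ1 : ∑ j, π j = 1) {h : Fin n → Fin d → ℝ}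
    (hpos : ∀ j i, 0 < h j i) {z : Fin d → ℝ} (hz : ∀ i, 0 < z i) (hz1 : ∑ i, z i = 1) :
    ∑ j, π j * Jeffreys (h j) z =
      KL (arithMean π h) z + KL z (normalize (geomMean π h)) +
        ((∑ j, π j * ∑ i, h j i * log (h j i)) -
          ∑ i, arithMean π h i * log (arithMean π h i) - log (∑ k, geomMean π h k)) := by
  simp only [Jeffreys_eq_KL_add_KL, mul_add, sum_add_distrib]
  rw [sum_mul_KL_left π h fun i => (hz i).ne', sum_mul_KL_right hπ1 hpos,
    KL_normalize hz1 (geomMean_pos hpos)]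
  ring

end Histogram

theorem jeffreys_frequency_equivalent_objective_general
    (d n : ℕ) (h : Fin n → Fin d → ℝ) (π : Fin n → ℝ)
    (hpos : ∀ j i, 0 < h j i)
    (hπ1 : ∑ j, π j = 1)
    (x y : Fin d → ℝ)
    (hx : ∀ i, 0 < x i) (hx1 : ∑ i, x i = 1)
    (hy : ∀ i, 0 < y i) (hy1 : ∑ i, y i = 1) :
    (∑ j, π j * Jeffreys (h j) x) - (∑ j, π j * Jeffreys (h j) y) =
      (KL (fun i => ∑ j, π j * h j i) x +
        KL x (fun i => (∏ j, h j i ^ π j) / ∑ k, ∏ j, h j k ^ π j)) -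
      (KL (fun i => ∑ j, π j * h j i) y +
        KL y (fun i => (∏ j, h j i ^ π j) / ∑ k, ∏ j, h j k ^ π j)) := by
  rw [Histogram.sum_mul_Jeffreys_eq hπ1 hpos hx hx1, Histogram.sum_mul_Jeffreys_eq hπ1 hpos hy hy1]
  unfold Histogram.arithMean Histogram.normalize Histogram.geomMean
  ring

/-- the weighted Jeffreys objective over frequency histograms differs
from `KL(ã : ·) + KL(· : g̃)` by a constant, where `ã` and `g̃` are the normalized
weighted arithmetic and geometric means. -/
theorem jeffreys_frequency_equivalent_objective
    (d n : ℕ) (h : Fin n → Fin d → ℝ) (π : Fin n → ℝ)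
    (hpos : ∀ j i, 0 < h j i) (hfreq : ∀ j, ∑ i, h j i = 1)
    (hπ : ∀ j, 0 < π j) (hπ1 : ∑ j, π j = 1)
    (x y : Fin d → ℝ)
    (hx : ∀ i, 0 < x i) (hx1 : ∑ i, x i = 1)
    (hy : ∀ i, 0 < y i) (hy1 : ∑ i, y i = 1) :
    (∑ j, π j * Jeffreys (h j) x) - (∑ j, π j * Jeffreys (h j) y) =
      (KL (fun i => ∑ j, π j * h j i) x +
        KL x (fun i => (∏ j, h j i ^ π j) / ∑ k, ∏ j, h j k ^ π j)) -
      (KL (fun i => ∑ j, π j * h j i) y +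
        KL y (fun i => (∏ j, h j i ^ π j) / ∑ k, ∏ j, h j k ^ π j)) :=
  jeffreys_frequency_equivalent_objective_general d n h π hpos hπ1 x y hx hx1 hy hy1
end

section
/- Let ã, g̃ ∈ (0,∞)^d with Σ_{i=1}^d ã^i = 1 and Σ_{i=1}^d g̃^i = 1, and suppose c̃ ∈ (0,∞)^d with Σ_{i=1}^d c̃^i = 1 and λ ∈ ℝ satisfy, for every i, log(c̃^i/g̃^i) + 1 − ã^i/c̃^i + λ = 0. Then max_{1≤i≤d} ( ã^i + log g̃^i − 1 ) ≤ λ ≤ 0. -/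
/-!
Multiplying the `i`-th stationarity condition by `c̃ⁱ` and summing over `i` gives
`λ = -KL(c̃ : g̃)`, which is nonpositive by Gibbs' inequality. For the lower bound, solve the
`i`-th condition for `λ`: since `0 < c̃ⁱ ≤ 1` we have `ãⁱ / c̃ⁱ ≥ ãⁱ` and `-log c̃ⁱ ≥ 0`.
-/

open Finset Real

lemma sub_le_mul_log_div {p q : ℝ} (hp : 0 < p) (hq : 0 < q) : p - q ≤ p * log (p / q) := by
  have h := one_sub_inv_le_log_of_pos (div_pos hp hq)
  rw [inv_div] at h
  calc p - q = p * (1 - q / p) := by field_simp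
    _ ≤ p * log (p / q) := mul_le_mul_of_nonneg_left h hp.le

lemma sum_mul_log_div_nonneg {ι : Type*} {s : Finset ι} {p q : ι → ℝ}
    (hp : ∀ i ∈ s, 0 < p i) (hq : ∀ i ∈ s, 0 < q i) (hpq : ∑ i ∈ s, q i ≤ ∑ i ∈ s, p i) :
    0 ≤ ∑ i ∈ s, p i * log (p i / q i) :=
  calc 0 ≤ ∑ i ∈ s, (p i - q i) := by rw [sum_sub_distrib]; linarith
    _ ≤ ∑ i ∈ s, p i * log (p i / q i) :=
      sum_le_sum fun i hi => sub_le_mul_log_div (hp i hi) (hq i hi)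

/-- under the stationarity conditions
`log(c̃ⁱ/g̃ⁱ) + 1 − ãⁱ/c̃ⁱ + λ = 0` (with `ã`, `g̃`, `c̃` positive and `ã`, `g̃`, `c̃`
frequency histograms as stated), the Lagrange multiplier satisfies
`maxᵢ (ãⁱ + log g̃ⁱ − 1) ≤ λ ≤ 0`, i.e. `ãⁱ + log g̃ⁱ − 1 ≤ λ` for every `i` and `λ ≤ 0`. -/
theorem lagrange_multiplier_bounds
    (d : ℕ) (a g c : Fin d → ℝ)
    (ha : ∀ i, 0 < a i) (hg : ∀ i, 0 < g i) (hc : ∀ i, 0 < c i)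
    (ha1 : ∑ i, a i = 1) (hg1 : ∑ i, g i = 1) (hc1 : ∑ i, c i = 1) (lam : ℝ)
    (hstat : ∀ i, Real.log (c i / g i) + 1 - a i / c i + lam = 0) :
    (∀ i, a i + Real.log (g i) - 1 ≤ lam) ∧ lam ≤ 0 := by
  have hc_le_one : ∀ i, c i ≤ 1 := fun i =>
    hc1 ▸ single_le_sum (fun j _ => (hc j).le) (mem_univ i)
  refine ⟨fun i => ?_, ?_⟩
  · have h := hstat i
    rw [log_div (hc i).ne' (hg i).ne'] at h
    have ha_le := le_div_self (ha i).le (hc i) (hc_le_one i)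
    have hlog_c := log_nonpos (hc i).le (hc_le_one i)
    linarith
  · have hweighted : ∀ i, lam * c i = a i - c i - c i * log (c i / g i) := fun i => by
      linear_combination c i * hstat i + mul_div_cancel₀ (a i) (hc i).ne'
    have hlam : lam = -∑ i, c i * log (c i / g i) :=
      calc lam = ∑ i, lam * c i := by rw [← mul_sum, hc1, mul_one]
        _ = ∑ i, (a i - c i - c i * log (c i / g i)) := sum_congr rfl fun i _ => hweighted i
        _ = -∑ i, c i * log (c i / g i) := by rw [sum_sub_distrib, sum_sub_distrib, ha1, hc1]; ring
    rw [hlam, neg_nonpos]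
    exact sum_mul_log_div_nonneg (fun i _ => hc i) (fun i _ => hg i) (by rw [hg1, hc1])
end

section
/- Let h̃_1, …, h̃_n be frequency histograms with d bins and weights π_j > 0 summing to 1, with normalized arithmetic mean ã^i = Σ_j π_j h̃_j^i and normalized geometric mean g̃^i = Π_j (h̃_j^i)^{π_j} / Σ_{k=1}^d Π_j (h̃_j^k)^{π_j}. A frequency histogram c̃ (with all coordinates positive) minimizes x ↦ Σ_j π_j J(h̃_j, x) over the frequency histograms if and only if there exists λ ∈ ℝ such that for every i = 1, …, d, log(c̃^i/g̃^i) + 1 − ã^i/c̃^i + λ = 0; equivalently, the quantity log(c̃^i/g̃^i) − ã^i/c̃^i does not depend on i. -/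
/-!
Since `∑ j, π j = 1`, the objective separates: `∑ j, π j * J(h j, x) = ∑ i, φᵢ (x i) + const`
with `φᵢ u = u log u - aᵢ log u - Lᵢ u` and `Lᵢ = ∑ j, π j log (h j i)`, each `φᵢ` convex on
`(0, ∞)`. A separable convex function restricted to `{x > 0, ∑ x = 1}` is minimized at `c` iff the
derivatives `φᵢ' (c i) = log (c i) + 1 - aᵢ / c i - Lᵢ` all agree: necessity by moving mass
between two coordinates, sufficiency by the tangent-line inequality. Finally
`log g i = Lᵢ - log (∑ k, ∏ j, h j k ^ π j)`, so `log (c i / g i) - a i / c i` differs from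
`φᵢ' (c i)` by a constant independent of `i`.
-/

open scoped BigOperators

open Finset Filter Set

theorem ConvexOn.mul_sub_le_sub_of_hasDerivAt {S : Set ℝ} {f : ℝ → ℝ} {x y f' : ℝ}
    (hfc : ConvexOn ℝ S f) (hx : x ∈ S) (hy : y ∈ S) (hf : HasDerivAt f f' x) :
    f' * (y - x) ≤ f y - f x := by
  rcases lt_trichotomy x y with hxy | rfl | hyx
  · have := hfc.le_slope_of_hasDerivAt hx hy hxy hf
    rwa [slope_def_field, le_div_iff₀ (sub_pos.2 hxy)] at this
  · simp
  · have := hfc.slope_le_of_hasDerivAt hy hx hyx hf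
    rw [slope_def_field, div_le_iff₀ (sub_pos.2 hyx)] at this
    linarith

section SeparableSum

variable {ι : Type*} [Fintype ι] {f : ι → ℝ → ℝ} {f' c : ι → ℝ}

theorem sum_le_sum_of_convexOn_of_hasDerivAt_eq (hconv : ∀ i, ConvexOn ℝ (Ioi 0) (f i))
    (hf : ∀ i, HasDerivAt (f i) (f' i) (c i)) (hf' : ∀ i j, f' i = f' j) (hc : ∀ i, 0 < c i)
    {x : ι → ℝ} (hx : ∀ i, 0 < x i) (hsum : ∑ i, x i = ∑ i, c i) :
    ∑ i, f i (c i) ≤ ∑ i, f i (x i) := by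
  rcases isEmpty_or_nonempty ι with hι | ⟨⟨i₀⟩⟩
  · simp
  have tangent : ∑ i, f' i₀ * (x i - c i) ≤ ∑ i, (f i (x i) - f i (c i)) :=
    sum_le_sum fun i _ => hf' i i₀ ▸ (hconv i).mul_sub_le_sub_of_hasDerivAt (hc i) (hx i) (hf i)
  rw [← mul_sum, sum_sub_distrib, sum_sub_distrib, hsum] at tangent
  linarith

theorem sum_mul_eq_zero_of_forall_sum_le (hf : ∀ i, HasDerivAt (f i) (f' i) (c i))
    (hc : ∀ i, 0 < c i)
    (hmin : ∀ x : ι → ℝ, (∀ i, 0 < x i) → ∑ i, x i = ∑ i, c i → ∑ i, f i (c i) ≤ ∑ i, f i (x i))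
    {v : ι → ℝ} (hv : ∑ i, v i = 0) :
    ∑ i, f' i * v i = 0 := by
  have hline : ∀ i, HasDerivAt (fun t => c i + t * v i) (v i) 0 := fun i => by
    simpa using ((hasDerivAt_id (0 : ℝ)).mul_const (v i)).const_add (c i)
  have hderiv : HasDerivAt (fun t => ∑ i, f i (c i + t * v i)) (∑ i, f' i * v i) 0 :=
    HasDerivAt.fun_sum fun i _ =>
      ((by simpa using hf i : HasDerivAt (f i) (f' i) (c i + 0 * v i)).comp 0 (hline i))
  have hpos : ∀ᶠ t in nhds 0, ∀ i, 0 < c i + t * v i := eventually_all.2 fun i =>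
    (hline i).continuousAt.eventually (lt_mem_nhds (by simpa using hc i))
  have hlocal : IsLocalMin (fun t => ∑ i, f i (c i + t * v i)) 0 := by
    filter_upwards [hpos] with t ht
    simpa using hmin _ ht (by simp [sum_add_distrib, ← mul_sum, hv])
  exact hlocal.hasDerivAt_eq_zero hderiv

theorem forall_sum_le_iff_hasDerivAt_eq [DecidableEq ι] (hconv : ∀ i, ConvexOn ℝ (Ioi 0) (f i))
    (hf : ∀ i, HasDerivAt (f i) (f' i) (c i)) (hc : ∀ i, 0 < c i) :
    (∀ x : ι → ℝ, (∀ i, 0 < x i) → ∑ i, x i = ∑ i, c i → ∑ i, f i (c i) ≤ ∑ i, f i (x i)) ↔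
      ∀ i j, f' i = f' j := by
  refine ⟨fun hmin i j => ?_, fun hf' x hx hsum =>
    sum_le_sum_of_convexOn_of_hasDerivAt_eq hconv hf hf' hc hx hsum⟩
  have := sum_mul_eq_zero_of_forall_sum_le hf hc hmin
    (v := Pi.single i 1 - Pi.single j 1) (by simp)
  simpa [mul_sub, sum_sub_distrib, sub_eq_zero, Pi.single_apply] using this

end SeparableSum

theorem convexOn_mul_log_sub_mul_log_sub_mul {a : ℝ} (ha : 0 ≤ a) (l : ℝ) :
    ConvexOn ℝ (Ioi 0) fun u => u * Real.log u - a * Real.log u - l * u :=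
  ((Real.convexOn_mul_log.subset Ioi_subset_Ici_self (convex_Ioi 0)).sub
    (strictConcaveOn_log_Ioi.concaveOn.smul ha)).sub
    ((LinearMap.mul ℝ ℝ l).concaveOn (convex_Ioi 0))

theorem hasDerivAt_mul_log_sub_mul_log_sub_mul (a l : ℝ) {t : ℝ} (ht : 0 < t) :
    HasDerivAt (fun u => u * Real.log u - a * Real.log u - l * u)
      (Real.log t + 1 - a / t - l) t := by
  simpa [div_eq_mul_inv] using
    ((Real.hasDerivAt_mul_log ht.ne').fun_sub ((Real.hasDerivAt_log ht.ne').const_mul a)).fun_sub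
      ((hasDerivAt_id t).const_mul l)

theorem sub_mul_log_div_eq {p u : ℝ} (hp : 0 < p) (hu : 0 < u) :
    (p - u) * Real.log (p / u) =
      (u * Real.log u - p * Real.log u - Real.log p * u) + p * Real.log p := by
  rw [Real.log_div hp.ne' hu.ne']
  ring

theorem sum_mul_jeffreys_eq {ι : Type*} [Fintype ι] {d : ℕ} (h : ι → Fin d → ℝ) (π : ι → ℝ)
    (hpos : ∀ j i, 0 < h j i) (hπ1 : ∑ j, π j = 1) {x : Fin d → ℝ} (hx : ∀ i, 0 < x i) :
    ∑ j, π j * Jeffreys (h j) x =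
      ∑ i, ((x i * Real.log (x i) - (∑ j, π j * h j i) * Real.log (x i) -
        (∑ j, π j * Real.log (h j i)) * x i) + ∑ j, π j * (h j i * Real.log (h j i))) := by
  simp_rw [Jeffreys, mul_sum]
  rw [sum_comm]
  refine sum_congr rfl fun i _ => ?_
  simp_rw [sub_mul_log_div_eq (hpos _ i) (hx i), mul_add, mul_sub, sum_add_distrib,
    sum_sub_distrib, ← sum_mul, ← mul_assoc, ← sum_mul, hπ1, one_mul]

theorem forall_sum_mul_jeffreys_le_iff {ι : Type*} [Fintype ι] {d : ℕ}
    (h : ι → Fin d → ℝ) (π : ι → ℝ) (hpos : ∀ j i, 0 < h j i) (hπ : ∀ j, 0 ≤ π j)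
    (hπ1 : ∑ j, π j = 1) {c : Fin d → ℝ} (hc : ∀ i, 0 < c i) :
    (∀ x : Fin d → ℝ, (∀ i, 0 < x i) → ∑ i, x i = ∑ i, c i →
        ∑ j, π j * Jeffreys (h j) c ≤ ∑ j, π j * Jeffreys (h j) x) ↔
      ∀ i i', Real.log (c i) + 1 - (∑ j, π j * h j i) / c i - ∑ j, π j * Real.log (h j i) =
        Real.log (c i') + 1 - (∑ j, π j * h j i') / c i' - ∑ j, π j * Real.log (h j i') := by
  have ha : ∀ i, 0 ≤ ∑ j, π j * h j i := fun i =>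
    sum_nonneg fun j _ => mul_nonneg (hπ j) (hpos j i).le
  rw [← forall_sum_le_iff_hasDerivAt_eq
    (fun i => (convexOn_mul_log_sub_mul_log_sub_mul (ha i) _).add_const
      (∑ j, π j * (h j i * Real.log (h j i))))
    (fun i => (hasDerivAt_mul_log_sub_mul_log_sub_mul _ _ (hc i)).add_const _) hc]
  refine forall_congr' fun x => forall_congr' fun hx => ?_
  rw [sum_mul_jeffreys_eq h π hpos hπ1 hc, sum_mul_jeffreys_eq h π hpos hπ1 hx]
  exact Iff.rfl

theorem Real.log_prod_rpow_s17 {ι : Type*} (s : Finset ι) {x : ι → ℝ} (hx : ∀ j ∈ s, 0 < x j)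
    (w : ι → ℝ) : Real.log (∏ j ∈ s, x j ^ w j) = ∑ j ∈ s, w j * Real.log (x j) := by
  rw [Real.log_prod fun j hj => (Real.rpow_pos_of_pos (hx j hj) _).ne']
  exact sum_congr rfl fun j hj => Real.log_rpow (hx j hj) _

theorem exists_add_eq_zero_iff_forall_eq {ι : Type*} [Nonempty ι] (E : ι → ℝ) :
    (∃ lam : ℝ, ∀ i, E i + lam = 0) ↔ ∀ i j, E i = E j := by
  refine ⟨fun ⟨lam, hlam⟩ i j => by linarith [hlam i, hlam j], fun hE => ?_⟩
  obtain ⟨i₀⟩ := ‹Nonempty ι›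
  exact ⟨-E i₀, fun i => by rw [hE i i₀, add_neg_cancel]⟩

theorem jeffreys_frequency_centroid_characterization_general
    (d n : ℕ) (h : Fin n → Fin d → ℝ) (π : Fin n → ℝ)
    (hpos : ∀ j i, 0 < h j i)
    (hπ : ∀ j, 0 < π j) (hπ1 : ∑ j, π j = 1)
    (c : Fin d → ℝ) (hc : ∀ i, 0 < c i) (hc1 : ∑ i, c i = 1)
    (a : Fin d → ℝ) (ha : a = fun i => ∑ j, π j * h j i)
    (g : Fin d → ℝ) (hg : g = fun i => (∏ j, h j i ^ π j) / ∑ k, ∏ j, h j k ^ π j) :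
    ((∀ x : Fin d → ℝ, (∀ i, 0 < x i) → (∑ i, x i = 1) →
        ∑ j, π j * Jeffreys (h j) c ≤ ∑ j, π j * Jeffreys (h j) x) ↔
      ∃ lam : ℝ, ∀ i, Real.log (c i / g i) + 1 - a i / c i + lam = 0) ∧
    ((∀ x : Fin d → ℝ, (∀ i, 0 < x i) → (∑ i, x i = 1) →
        ∑ j, π j * Jeffreys (h j) c ≤ ∑ j, π j * Jeffreys (h j) x) ↔
      ∀ i i' : Fin d,
        Real.log (c i / g i) - a i / c i = Real.log (c i' / g i') - a i' / c i') := by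
  have : Nonempty (Fin d) := by
    by_contra hempty
    simp [not_nonempty_iff.1 hempty] at hc1
  set L : Fin d → ℝ := fun i => ∑ j, π j * Real.log (h j i)
  set S : ℝ := ∑ k, ∏ j, h j k ^ π j
  set D : Fin d → ℝ := fun i => Real.log (c i) + 1 - a i / c i - L i
  have hmin_iff : (∀ x : Fin d → ℝ, (∀ i, 0 < x i) → (∑ i, x i = 1) →
      ∑ j, π j * Jeffreys (h j) c ≤ ∑ j, π j * Jeffreys (h j) x) ↔ ∀ i i', D i = D i' := by
    have ha' : ∀ i, ∑ j, π j * h j i = a i := fun i => by rw [ha]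
    simpa only [hc1, ha'] using forall_sum_mul_jeffreys_le_iff h π hpos (fun j => (hπ j).le) hπ1 hc
  have hP : ∀ i, 0 < ∏ j, h j i ^ π j := fun i =>
    prod_pos fun j _ => Real.rpow_pos_of_pos (hpos j i) _
  have hS : 0 < S := sum_pos (fun k _ => hP k) univ_nonempty
  have hlog_g : ∀ i, Real.log (g i) = L i - Real.log S := fun i => by
    rw [hg, Real.log_div (hP i).ne' hS.ne', Real.log_prod_rpow_s17 _ fun j _ => hpos j i]
  have hg_pos : ∀ i, 0 < g i := fun i => by
    rw [hg]
    exact div_pos (hP i) hS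
  have hdiff : ∀ i, Real.log (c i / g i) - a i / c i = D i + (Real.log S - 1) := fun i => by
    rw [Real.log_div (hc i).ne' (hg_pos i).ne', hlog_g]
    ring
  refine ⟨hmin_iff.trans ?_, hmin_iff.trans ?_⟩
  · have hlagrange : ∀ i, Real.log (c i / g i) + 1 - a i / c i = D i + Real.log S :=
      fun i => by linarith [hdiff i]
    simp_rw [hlagrange, exists_add_eq_zero_iff_forall_eq (fun i => D i + Real.log S), add_left_inj]
  · simp_rw [hdiff, add_left_inj]

/-- a frequency histogram `c̃` minimizes the weighted Jeffreys objective
over the frequency histograms iff there is a `λ` with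
`log(c̃ⁱ/g̃ⁱ) + 1 − ãⁱ/c̃ⁱ + λ = 0` for all `i`; equivalently, iff
`log(c̃ⁱ/g̃ⁱ) − ãⁱ/c̃ⁱ` does not depend on `i`. -/
theorem jeffreys_frequency_centroid_characterization
    (d n : ℕ) (h : Fin n → Fin d → ℝ) (π : Fin n → ℝ)
    (hpos : ∀ j i, 0 < h j i) (hfreq : ∀ j, ∑ i, h j i = 1)
    (hπ : ∀ j, 0 < π j) (hπ1 : ∑ j, π j = 1)
    (c : Fin d → ℝ) (hc : ∀ i, 0 < c i) (hc1 : ∑ i, c i = 1)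
    (a : Fin d → ℝ) (ha : a = fun i => ∑ j, π j * h j i)
    (g : Fin d → ℝ) (hg : g = fun i => (∏ j, h j i ^ π j) / ∑ k, ∏ j, h j k ^ π j) :
    ((∀ x : Fin d → ℝ, (∀ i, 0 < x i) → (∑ i, x i = 1) →
        ∑ j, π j * Jeffreys (h j) c ≤ ∑ j, π j * Jeffreys (h j) x) ↔
      ∃ lam : ℝ, ∀ i, Real.log (c i / g i) + 1 - a i / c i + lam = 0) ∧
    ((∀ x : Fin d → ℝ, (∀ i, 0 < x i) → (∑ i, x i = 1) →
        ∑ j, π j * Jeffreys (h j) c ≤ ∑ j, π j * Jeffreys (h j) x) ↔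
      ∀ i i' : Fin d,
        Real.log (c i / g i) - a i / c i = Real.log (c i' / g i') - a i' / c i') :=
  jeffreys_frequency_centroid_characterization_general d n h π hpos hπ hπ1 c hc hc1 a ha g hg
end
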